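/- arXiv:2211.01660 — 4 statements merged into one kernel-verified Lean document; each statement's English description precedes it below -/
import Mathlib

section
/- Let v be a nonempty palindromic prefix w_n in the palindromic-closure construction of a standard episturmian sequence. For each letter a occurring in v, let m_a be the maximum length of a palindromic prefix p of v such that pa is a prefix of v. Then Γ = {m_a : a occurs in v} is a string attractor of v, and it has minimal size among all string attractors of v. -/
open List

variable {A : Type*}

/-- `p` is the palindromic closure `(wa)⁺`: the shortest palindrome with `w ++ [a]` as prefix. -/
def IsPalClosure (w : List A) (a : A) (p : List A) : Prop :=
  p.Palindrome ∧ (w ++ [a]) <+: p ∧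
    ∀ q : List A, q.Palindrome → (w ++ [a]) <+: q → p.length ≤ q.length

/-- `v` occurs in `w` at position `i` (occupying positions `i, …, i + |v| - 1`). -/
def OccAt (w v : List A) (i : ℕ) : Prop :=
  i + v.length ≤ w.length ∧ (w.drop i).take v.length = v

/-- `Γ` is a string attractor of `w`: every nonempty factor of `w` has an occurrence
containing a position of `Γ`. -/
def IsAttractor (w : List A) (Γ : Set ℕ) : Prop :=
  (∀ k ∈ Γ, k < w.length) ∧
  ∀ v : List A, v ≠ [] → v <:+: w →
    ∃ i, OccAt w v i ∧ ∃ k ∈ Γ, i ≤ k ∧ k < i + v.length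

/-- `m` is the maximal length of a palindromic prefix `p` of `v` such that
`p ++ [a]` is a prefix of `v`. -/
def IsMaxPalPrefLen (v : List A) (a : A) (m : ℕ) : Prop :=
  (∃ p : List A, p.Palindrome ∧ (p ++ [a]) <+: v ∧ p.length = m) ∧
  ∀ p : List A, p.Palindrome → (p ++ [a]) <+: v → p.length ≤ m

/-! ### Auxiliary lemmas -/

lemma maxPal_unique {v : List A} {a : A} {m m' : ℕ}
    (h : IsMaxPalPrefLen v a m) (h' : IsMaxPalPrefLen v a m') : m = m' := by
  obtain ⟨⟨p, hp, hpa, hl⟩, hmax⟩ := h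
  obtain ⟨⟨p', hp', hpa', hl'⟩, hmax'⟩ := h'
  exact le_antisymm (hl ▸ hmax' p hp hpa) (hl' ▸ hmax p' hp' hpa')

lemma take_drop_of_prefix {w w' : List A} (h : w <+: w') {i ℓ : ℕ}
    (hle : i + ℓ ≤ w.length) : (w'.drop i).take ℓ = (w.drop i).take ℓ := by
  obtain ⟨t, rfl⟩ := h
  rw [List.drop_append_of_le_length (by omega), List.take_append_of_le_length]
  rw [List.length_drop]; omega

lemma occAt_of_eq {w v x y : List A} (h : w = x ++ v ++ y) : OccAt w v x.length := by
  subst h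
  refine ⟨by simp [List.length_append], ?_⟩
  rw [List.append_assoc, List.drop_left, List.take_left]

lemma occAt_of_prefix {w w' v : List A} {i : ℕ} (h : w <+: w') (ho : OccAt w v i) :
    OccAt w' v i :=
  ⟨ho.1.trans h.length_le, by rw [take_drop_of_prefix h ho.1]; exact ho.2⟩

/-- Structure of the palindromic closure: `(wa)⁺ = s ++ [a] ++ w` where `s <+: w`, and
the length of `s` is determined by the maximal palindromic prefix of `w` followed by `a`. -/
lemma step_decomp {w c : List A} {a : A} (hw : w.Palindrome) (hc : IsPalClosure w a c) :
    ∃ s : List A, c = s ++ [a] ++ w ∧ s <+: w ∧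
      ∀ m, IsMaxPalPrefLen w a m → s.length + 1 + m = w.length := by
  obtain ⟨hcpal, hpre, hmin⟩ := hc
  obtain ⟨t, hct⟩ := hpre
  have hwc : w <+: c := (List.prefix_append w [a]).trans ⟨t, hct⟩
  have hrev : c = t.reverse ++ [a] ++ w := by
    have h := congrArg List.reverse hct
    rw [hcpal.reverse_eq] at h
    rw [← h]; simp [List.reverse_append, hw.reverse_eq, List.append_assoc]
  have hcandpal : (w ++ [a] ++ w).Palindrome := by
    apply Palindrome.of_reverse_eq
    simp [List.reverse_append, hw.reverse_eq, List.append_assoc]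
  have hlen1 : c.length ≤ 2 * w.length + 1 := by
    have := hmin _ hcandpal ⟨w, rfl⟩
    simp [List.length_append] at this; omega
  have hclen : c.length = w.length + 1 + t.length := by
    have := congrArg List.length hct
    simp [List.length_append] at this; omega
  have htlen : t.length ≤ w.length := by omega
  have hspre : t.reverse <+: w := by
    refine List.prefix_of_prefix_length_le
      ⟨[a] ++ w, by rw [hrev, List.append_assoc]⟩ hwc (by simpa using htlen)
  refine ⟨t.reverse, hrev, hspre, ?_⟩
  intro m hm
  obtain ⟨⟨p, hppal, hppre, hplen⟩, hmax⟩ := hm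
  obtain ⟨y, hy⟩ := hppre
  -- hy : (p ++ [a]) ++ y = w
  have hw2 : w = y.reverse ++ [a] ++ p := by
    have h := congrArg List.reverse hy
    rw [hw.reverse_eq] at h
    rw [← h]; simp [List.reverse_append, hppal.reverse_eq, List.append_assoc]
  have hupper : t.length + 1 + m ≤ w.length := by
    have hc2pal : (y.reverse ++ [a] ++ p ++ [a] ++ y).Palindrome := by
      apply Palindrome.of_reverse_eq
      simp [List.reverse_append, hppal.reverse_eq, List.append_assoc]
    have hc2pre : w ++ [a] ++ y = y.reverse ++ [a] ++ p ++ [a] ++ y := by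
      rw [hw2]
    have := hmin _ hc2pal ⟨y, hc2pre⟩
    have hylen := congrArg List.length hy
    simp [List.length_append] at this hylen
    omega
  have hlower : w.length ≤ t.length + 1 + m := by
    by_contra hcon
    push_neg at hcon
    have h1 : t.reverse ++ [a] <+: w := by
      refine List.prefix_of_prefix_length_le ⟨w, hrev.symm⟩ hwc (by simp; omega)
    obtain ⟨z, hz⟩ := h1
    -- hz : (t.reverse ++ [a]) ++ z = w
    have hwz : w = z ++ [a] ++ t := by
      have e : t.reverse ++ [a] ++ w = t.reverse ++ [a] ++ (z ++ [a] ++ t) := by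
        rw [← hrev, ← hct, ← hz]; simp [List.append_assoc]
      exact List.append_cancel_left e
    have hzpal : z.Palindrome := by
      have hzz : t.reverse ++ [a] ++ z.reverse = t.reverse ++ [a] ++ z := by
        calc t.reverse ++ [a] ++ z.reverse = (z ++ [a] ++ t).reverse := by
              simp [List.reverse_append, List.append_assoc]
        _ = w.reverse := by rw [← hwz]
        _ = w := hw.reverse_eq
        _ = t.reverse ++ [a] ++ z := hz.symm
      exact Palindrome.of_reverse_eq (List.append_cancel_left hzz)
    have hle := hmax z hzpal ⟨t, hwz.symm⟩
    have hzlen := congrArg List.length hwz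
    simp [List.length_append] at hzlen
    omega
  simp only [List.length_reverse]
  omega

/-- After the closure step, `|w|` is the new maximal palindromic-prefix length for `a`. -/
lemma maxPal_step_new {w c : List A} {a : A} (hw : w.Palindrome) (hc : IsPalClosure w a c) :
    IsMaxPalPrefLen c a w.length := by
  obtain ⟨hcpal, hpre, hmin⟩ := hc
  refine ⟨⟨w, hw, hpre, rfl⟩, ?_⟩
  intro p hppal hppre
  by_contra hcon
  push_neg at hcon
  have hpc : p <+: c := (List.prefix_append p [a]).trans hppre
  have h1 : w ++ [a] <+: p := by
    refine List.prefix_of_prefix_length_le hpre hpc (by simp; omega)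
  have h2 := hmin p hppal h1
  have h3 := hppre.length_le
  simp [List.length_append] at h3
  omega

/-- For letters `b ≠ a`, the maximal palindromic-prefix length is unchanged by the step. -/
lemma maxPal_step_old {w c : List A} {a b : A} (hw : w.Palindrome) (hc : IsPalClosure w a c)
    (hba : b ≠ a) {m : ℕ} : IsMaxPalPrefLen w b m ↔ IsMaxPalPrefLen c b m := by
  obtain ⟨hcpal, hpre, hmin⟩ := hc
  have hwc : w <+: c := (List.prefix_append w [a]).trans hpre
  have hsmall : ∀ p : List A, p.Palindrome → p ++ [b] <+: c → p ++ [b] <+: w := by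
    intro p hppal hppre
    have hpc : p <+: c := (List.prefix_append p [b]).trans hppre
    have hlt : p.length < w.length := by
      rcases lt_trichotomy p.length w.length with h | h | h
      · exact h
      · exfalso
        have hpw : p = w :=
          (List.prefix_of_prefix_length_le hpc hwc h.le).eq_of_length h
        subst hpw
        have : p ++ [b] = p ++ [a] := by
          refine (List.prefix_of_prefix_length_le hppre hpre (by simp)).eq_of_length (by simp)
        exact hba (by simpa using List.append_cancel_left this)
      · exfalso
        have h1 : w ++ [a] <+: p := by
          refine List.prefix_of_prefix_length_le hpre hpc (by simp; omega)
        have h2 := hmin p hppal h1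
        have h3 := hppre.length_le
        simp [List.length_append] at h3
        omega
    exact List.prefix_of_prefix_length_le hppre hwc (by simp; omega)
  constructor
  · rintro ⟨⟨p, hppal, hppre, hplen⟩, hmax⟩
    exact ⟨⟨p, hppal, hppre.trans hwc, hplen⟩, fun p hp hpp => hmax p hp (hsmall p hp hpp)⟩
  · rintro ⟨⟨p, hppal, hppre, hplen⟩, hmax⟩
    exact ⟨⟨p, hppal, hsmall p hppal hppre, hplen⟩,
      fun p hp hpp => hmax p hp (hpp.trans hwc)⟩

section Main

variable (W : ℕ → List A) (δ : ℕ → A)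

lemma palW (h0 : W 0 = []) (hstep : ∀ n, IsPalClosure (W n) (δ n) (W (n+1))) :
    ∀ n, (W n).Palindrome := by
  intro n
  cases n with
  | zero => rw [h0]; exact Palindrome.nil
  | succ n => exact (hstep n).1

lemma existsMax (h0 : W 0 = []) (hstep : ∀ n, IsPalClosure (W n) (δ n) (W (n+1))) :
    ∀ n, ∀ b ∈ W n, ∃ m, IsMaxPalPrefLen (W n) b m := by
  intro n
  induction n with
  | zero => intro b hb; rw [h0] at hb; exact absurd hb List.not_mem_nil
  | succ n ih =>
    intro b hb
    by_cases hba : b = δ n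
    · subst hba
      exact ⟨(W n).length, maxPal_step_new (palW W δ h0 hstep n) (hstep n)⟩
    · obtain ⟨s, hdec, hs, _⟩ := step_decomp (palW W δ h0 hstep n) (hstep n)
      have hbw : b ∈ W n := by
        rw [hdec] at hb
        rcases List.mem_append.mp hb with h | h
        · rcases List.mem_append.mp h with h' | h'
          · exact hs.subset h'
          · exact absurd (by simpa using h') hba
        · exact h
      obtain ⟨m, hm⟩ := ih b hbw
      exact ⟨m, (maxPal_step_old (palW W δ h0 hstep n) (hstep n) hba).mp hm⟩

lemma att_main (h0 : W 0 = []) (hstep : ∀ n, IsPalClosure (W n) (δ n) (W (n+1))) (n : ℕ) :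
    IsAttractor (W n) {m | ∃ a ∈ W n, IsMaxPalPrefLen (W n) a m} := by
  have hpal := palW W δ h0 hstep
  constructor
  · rintro k ⟨a, ha, ⟨p, _, hppre, hplen⟩, _⟩
    have := hppre.length_le
    simp [List.length_append] at this
    omega
  · induction n with
    | zero =>
      intro v hv hinf
      rw [h0] at hinf
      exact absurd (List.infix_nil.mp hinf) hv
    | succ n ih =>
      intro f hf hinf
      obtain ⟨s, hdec, hs, hkey⟩ := step_decomp (hpal n) (hstep n)
      have hwpre : W n <+: W (n+1) := (List.prefix_append (W n) [δ n]).trans (hstep n).2.1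
      have hanew : ((W n).length : ℕ) ∈ {m | ∃ a ∈ W (n+1), IsMaxPalPrefLen (W (n+1)) a m} := by
        refine ⟨δ n, ?_, maxPal_step_new (hpal n) (hstep n)⟩
        rw [hdec]; simp
      have handler : f <:+: W n →
          ∃ i, OccAt (W (n+1)) f i ∧
            ∃ k ∈ {m | ∃ a ∈ W (n+1), IsMaxPalPrefLen (W (n+1)) a m},
              i ≤ k ∧ k < i + f.length := by
        intro hfw
        obtain ⟨i0, hocc0, k0, ⟨b, hb, hbmax⟩, hik, hki⟩ := ih f hf hfw
        by_cases hba : b = δ n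
        · subst hba
          have hkk : s.length + 1 + k0 = (W n).length := hkey k0 hbmax
          refine ⟨i0 + (s.length + 1), ⟨?_, ?_⟩, (W n).length, hanew, by omega, by omega⟩
          · have := hocc0.1
            rw [hdec]; simp [List.length_append]; omega
          · have hd : (W (n+1)).drop (i0 + (s.length + 1)) = (W n).drop i0 := by
              rw [hdec, List.append_assoc]
              have he : i0 + (s.length + 1) = (s ++ [δ n]).length + i0 := by
                simp [List.length_append]; omega
              rw [← List.append_assoc, he, List.drop_length_add_append]
            rw [hd]; exact hocc0.2
        · refine ⟨i0, occAt_of_prefix hwpre hocc0, k0,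
            ⟨b, hwpre.subset hb, (maxPal_step_old (hpal n) (hstep n) hba).mp hbmax⟩, hik, hki⟩
      obtain ⟨x, y, hxy⟩ := hinf
      -- hxy : x ++ f ++ y = W (n+1)
      by_cases h1 : x.length + f.length ≤ (W n).length
      · apply handler
        have hxf : x ++ f <+: W (n+1) := ⟨y, hxy⟩
        have hxfw : x ++ f <+: W n :=
          List.prefix_of_prefix_length_le hxf hwpre (by simp [List.length_append]; omega)
        have hfxf : f <:+: x ++ f := ⟨x, [], by simp⟩
        exact hfxf.trans hxfw.isInfix
      · by_cases h2 : s.length + 1 ≤ x.length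
        · apply handler
          have hsx : s ++ [δ n] <+: x := by
            refine List.prefix_of_prefix_length_le ⟨W n, hdec.symm⟩ ⟨f ++ y, ?_⟩ ?_
            · rw [← hxy]; simp [List.append_assoc]
            · simp [List.length_append]; omega
          obtain ⟨x', hx'⟩ := hsx
          have he : s ++ [δ n] ++ (x' ++ f ++ y) = s ++ [δ n] ++ W n := by
            calc s ++ [δ n] ++ (x' ++ f ++ y) = (s ++ [δ n] ++ x') ++ f ++ y := by
                  simp [List.append_assoc]
            _ = x ++ f ++ y := by rw [hx']
            _ = W (n+1) := hxy
            _ = s ++ [δ n] ++ W n := hdec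
          exact ⟨x', y, List.append_cancel_left he⟩
        · push_neg at h1 h2
          refine ⟨x.length, occAt_of_eq hxy.symm, (W n).length, hanew, ?_, by omega⟩
          have := hs.length_le
          omega

lemma minimality (v : List A) (hE : ∀ b ∈ v, ∃ m, IsMaxPalPrefLen v b m)
    (Γ : Set ℕ) (hΓ : IsAttractor v Γ) :
    {m | ∃ a ∈ v, IsMaxPalPrefLen v a m}.ncard ≤ Γ.ncard := by
  classical
  have hΓfin : Γ.Finite := (Set.finite_Iio v.length).subset (fun k hk => hΓ.1 k hk)
  set S : Set A := {b | b ∈ v} with hS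
  have hSfin : S.Finite := by
    have : S = Set.range (fun i : Fin v.length => v.get i) := by
      ext b; simp [hS, List.mem_iff_get]
    rw [this]; exact Set.finite_range _
  set F : A → ℕ := fun b => if h : ∃ m, IsMaxPalPrefLen v b m then h.choose else 0 with hF
  have hAttsub : {m | ∃ a ∈ v, IsMaxPalPrefLen v a m} ⊆ F '' S := by
    rintro m ⟨b, hb, hm⟩
    refine ⟨b, hb, ?_⟩
    have h : ∃ m, IsMaxPalPrefLen v b m := ⟨m, hm⟩
    simp only [hF, dif_pos h]
    exact maxPal_unique h.choose_spec hm
  set g : A → ℕ := fun b => if h : ∃ k ∈ Γ, (v.drop k).take 1 = [b] then h.choose else 0 with hg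
  have hgspec : ∀ b ∈ S, g b ∈ Γ ∧ (v.drop (g b)).take 1 = [b] := by
    intro b hb
    have hinf : [b] <:+: v := by
      obtain ⟨s, t, rfl⟩ := List.mem_iff_append.mp hb
      exact ⟨s, t, by simp⟩
    obtain ⟨i, hocc, k, hkΓ, hik, hki⟩ := hΓ.2 [b] (by simp) hinf
    have hk : k = i := by simp at hki; omega
    have h : ∃ k ∈ Γ, (v.drop k).take 1 = [b] := ⟨k, hkΓ, by rw [hk]; simpa using hocc.2⟩
    simp only [hg, dif_pos h]
    exact h.choose_spec
  have hginj : Set.InjOn g S := by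
    intro b hb b' hb' heq
    have h1 := (hgspec b hb).2
    have h2 := (hgspec b' hb').2
    rw [heq, h2] at h1
    exact (List.singleton_inj.mp h1).symm
  have hsub2 : g '' S ⊆ Γ := by
    rintro k ⟨b, hb, rfl⟩
    exact (hgspec b hb).1
  calc {m | ∃ a ∈ v, IsMaxPalPrefLen v a m}.ncard
      ≤ (F '' S).ncard := Set.ncard_le_ncard hAttsub (hSfin.image F)
    _ ≤ S.ncard := Set.ncard_image_le hSfin
    _ = (g '' S).ncard := (Set.ncard_image_of_injOn hginj).symm
    _ ≤ Γ.ncard := Set.ncard_le_ncard hsub2 hΓfin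

end Main

theorem attractor_of_palindromic_prefix (W : ℕ → List A) (δ : ℕ → A)
    (h0 : W 0 = []) (hstep : ∀ n, IsPalClosure (W n) (δ n) (W (n+1)))
    (n : ℕ) (hne : W n ≠ []) :
    IsAttractor (W n) {m | ∃ a ∈ W n, IsMaxPalPrefLen (W n) a m} ∧
    ∀ Γ : Set ℕ, IsAttractor (W n) Γ →
      {m | ∃ a ∈ W n, IsMaxPalPrefLen (W n) a m}.ncard ≤ Γ.ncard :=
  ⟨att_main W δ h0 hstep n,
   fun Γ hΓ => minimality (W n) (existsMax W δ h0 hstep n) Γ hΓ⟩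
end

section
/- For the Tribonacci palindromic prefixes w_n (directive sequence (012)^ω), the attractor Γ of w_n given by the longest-palindromic-prefix construction satisfies Γ = {|w_{n-3}|, |w_{n-2}|, |w_{n-1}|} for all n ≥ 3. -/
open List

variable {A : Type*}

section Aux

variable (W : ℕ → List (Fin 3)) (δ : ℕ → Fin 3)
  (h0 : W 0 = []) (hstep : ∀ n, IsPalClosure (W n) (δ n) (W (n+1)))

include hstep

include h0



lemma aux_pal' (k : ℕ) : (W k).Palindrome := by
  cases k with
  | zero => rw [h0]; exact List.Palindrome.nil
  | succ k => exact (hstep k).1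

omit h0

lemma aux_step_pref (k : ℕ) : W k ++ [δ k] <+: W (k + 1) := (hstep k).2.1

lemma aux_mono {k m : ℕ} (h : k ≤ m) : W k <+: W m := by
  induction m with
  | zero => cases Nat.le_zero.mp h; exact List.prefix_refl _
  | succ m ih =>
      rcases Nat.lt_or_ge k (m + 1) with h' | h'
      · exact ((ih (Nat.lt_succ_iff.mp h')).trans
          ((List.prefix_append _ _).trans (aux_step_pref W δ hstep m)))
      · have : k = m + 1 := le_antisymm h h'
        subst this; exact List.prefix_refl _

lemma aux_len_lt {k : ℕ} : (W k).length < (W (k+1)).length := by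
  have := (aux_step_pref W δ hstep k).length_le
  simpa using this

lemma aux_len_mono {k m : ℕ} (h : k ≤ m) : (W k).length ≤ (W m).length :=
  (aux_mono W δ hstep h).length_le

/-- `W k ++ [δ k]` is a prefix of `W n` for `k < n`. -/
lemma aux_step_pref' {k n : ℕ} (h : k < n) : W k ++ [δ k] <+: W n :=
  (aux_step_pref W δ hstep k).trans (aux_mono W δ hstep h)

include h0

/-- Every palindromic prefix of `W n` is some `W k`. -/
lemma aux_pal_pref {n : ℕ} {p : List (Fin 3)} (hp : p.Palindrome) (hpre : p <+: W n) :
    ∃ k ≤ n, p = W k := by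
  induction n with
  | zero =>
      refine ⟨0, le_refl _, ?_⟩
      rw [h0] at hpre ⊢
      simpa using hpre
  | succ n ih =>
      rcases le_or_gt p.length (W n).length with h | h
      · obtain ⟨k, hk, hpk⟩ := ih (List.prefix_of_prefix_length_le hpre
          (aux_mono W δ hstep (Nat.le_succ n)) h)
        exact ⟨k, hk.trans (Nat.le_succ n), hpk⟩
      · have h1 : W n ++ [δ n] <+: p := by
          refine List.prefix_of_prefix_length_le (aux_step_pref W δ hstep n) hpre ?_
          simpa using h
        have h2 : (W (n+1)).length ≤ p.length := (hstep n).2.2 p hp h1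
        have h3 : p = W (n+1) :=
          hpre.eq_of_length (le_antisymm hpre.length_le h2)
        exact ⟨n+1, le_refl _, h3⟩

/-- The letter following the prefix `W k` in `W n` is `δ k`. -/
lemma aux_next_letter {k n : ℕ} (h : k < n) {a : Fin 3} (ha : W k ++ [a] <+: W n) :
    a = δ k := by
  have h1 := aux_step_pref' W δ hstep h
  have h2 : W k ++ [a] = W k ++ [δ k] := by
    have := List.prefix_of_prefix_length_le ha h1 (by simp)
    exact this.eq_of_length (by simp)
  have := List.append_cancel_left h2
  simpa using this

lemma aux_delta_mod {k j : ℕ} (hδ : ∀ n, δ n = Fin.ofNat 3 n) (h : k % 3 = j % 3) :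
    δ k = δ j := by
  rw [hδ, hδ]
  have : (Fin.ofNat 3 k).val = (Fin.ofNat 3 j).val := by
    exact h
  exact Fin.val_injective this

lemma aux_delta_mod' {k j : ℕ} (hδ : ∀ n, δ n = Fin.ofNat 3 n) (h : δ k = δ j) :
    k % 3 = j % 3 := by
  rw [hδ, hδ] at h
  have := congrArg Fin.val h
  exact this

/-- Core: if `j < n` is the largest index below `n` in its residue class mod 3,
then `δ j ∈ W n` and `|W j|` is the max-pal-pref length for `δ j`. -/
lemma aux_core {n j : ℕ} (hδ : ∀ n, δ n = Fin.ofNat 3 n) (hjn : j < n)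
    (hmax : ∀ k, k < n → k % 3 = j % 3 → k ≤ j) :
    δ j ∈ W n ∧ IsMaxPalPrefLen (W n) (δ j) (W j).length := by
  have hpref := aux_step_pref' W δ hstep hjn
  constructor
  · exact hpref.sublist.subset (by simp)
  constructor
  · exact ⟨W j, aux_pal' W δ h0 hstep j, hpref, rfl⟩
  · intro p hp hpa
    obtain ⟨k, hk, rfl⟩ := aux_pal_pref W δ h0 hstep hp
      ((List.prefix_append _ _).trans hpa)
    have hkn : k < n := by
      rcases Nat.lt_or_ge k n with h | h
      · exact h
      · exfalso
        have h1 : (W k ++ [δ j]).length ≤ (W n).length := hpa.length_le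
        have h2 : (W n).length ≤ (W k).length := aux_len_mono W δ hstep h
        simp at h1; omega
    have : δ j = δ k := aux_next_letter W δ h0 hstep hkn hpa
    have hmod : k % 3 = j % 3 := (aux_delta_mod' W δ h0 hstep hδ this.symm)
    exact aux_len_mono W δ hstep (hmax k hkn hmod)

end Aux

theorem tribonacci_attractor (W : ℕ → List (Fin 3)) (δ : ℕ → Fin 3)
    (hδ : ∀ n, δ n = Fin.ofNat 3 n)
    (h0 : W 0 = []) (hstep : ∀ n, IsPalClosure (W n) (δ n) (W (n+1)))
    (n : ℕ) (hn : 3 ≤ n) :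
    {m | ∃ a ∈ W n, IsMaxPalPrefLen (W n) a m} =
      {(W (n-3)).length, (W (n-2)).length, (W (n-1)).length} := by
  ext m
  simp only [Set.mem_setOf_eq, Set.mem_insert_iff, Set.mem_singleton_iff]
  constructor
  · rintro ⟨a, ha, ⟨⟨p, hp, hpa, hlen⟩, hm⟩⟩
    obtain ⟨k, hk, rfl⟩ := aux_pal_pref W δ h0 hstep hp
      ((List.prefix_append _ _).trans hpa)
    have hkn : k < n := by
      rcases Nat.lt_or_ge k n with h | h
      · exact h
      · exfalso
        have h1 : (W k ++ [a]).length ≤ (W n).length := hpa.length_le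
        have h2 : (W n).length ≤ (W k).length := aux_len_mono W δ hstep h
        simp at h1; omega
    have hak : a = δ k := aux_next_letter W δ h0 hstep hkn hpa
    -- choose j ∈ {n-3, n-2, n-1} with j ≡ k [MOD 3]
    set j := n - 1 - ((n - 1 - k) % 3) with hj
    have hjcases : j = n - 3 ∨ j = n - 2 ∨ j = n - 1 := by omega
    have hkj : k ≤ j := by omega
    have hjn : j < n := by omega
    have hmod : j % 3 = k % 3 := by omega
    have hδjk : δ j = δ k := aux_delta_mod W δ h0 hstep hδ hmod
    -- m ≤ |W j|
    have h1 : (W k).length ≤ (W j).length := aux_len_mono W δ hstep hkj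
    -- |W j| ≤ m
    have h2 : (W j).length ≤ (W k).length := by
      have := hm (W j) (aux_pal' W δ h0 hstep j) ?_
      · omega
      · rw [hak, ← hδjk]; exact aux_step_pref' W δ hstep hjn
    have : m = (W j).length := by omega
    rcases hjcases with h | h | h
    · left; rw [this, h]
    · right; left; rw [this, h]
    · right; right; rw [this, h]
  · rintro (hm | hm | hm)
    · obtain ⟨h1, h2⟩ := aux_core W δ h0 hstep hδ (show n - 3 < n by omega)
        (fun k hk hmod => by omega)
      exact ⟨δ (n-3), h1, hm ▸ h2⟩
    · obtain ⟨h1, h2⟩ := aux_core W δ h0 hstep hδ (show n - 2 < n by omega)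
        (fun k hk hmod => by omega)
      exact ⟨δ (n-2), h1, hm ▸ h2⟩
    · obtain ⟨h1, h2⟩ := aux_core W δ h0 hstep hδ (show n - 1 < n by omega)
        (fun k hk hmod => by omega)
      exact ⟨δ (n-1), h1, hm ▸ h2⟩
end

section
/- For the Tribonacci palindromic prefixes w_n (directive sequence (012)^ω), |w_n| = (T_{n+3} + T_{n+1} - 3)/2, where T_n are the Tribonacci numbers with T_0 = 0, T_1 = 1, T_2 = 1 and T_n = T_{n-1} + T_{n-2} + T_{n-3}. -/
/-!
For a palindrome `w`, the palindromic closure `(wa)⁺` has length `2|w| - |p|`, where `p` is the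
longest palindromic prefix of `w` followed by `a` in `w` (and `2|w| + 1` if there is none): a
palindrome extending `wa` overlaps its own reversal, and the overlap is such a `p`.
The palindromic prefixes of `w_n` are exactly `w_0, …, w_n`, and `w_j` is followed by `δ_j`.
With `δ` of period `3`, the `p` for `w_{n+1}` is therefore `w_{n-3}`, so
`|w_{n+1}| = 2|w_n| - |w_{n-3}|` for `n ≥ 3`, while the first three steps double and add one.
The Tribonacci recurrence gives `T_{n+4} + T_n = 2 T_{n+3}`, so `2|w_n| + 3` and
`T_{n+3} + T_{n+1}` satisfy the same recurrence and agree on `n < 4`.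
-/

open List
open Fin.NatCast

variable {A : Type*}

namespace List.Palindrome

theorem exists_palindrome_prefix_of_extension {w q : List A} {a : A}
    (hw : w.Palindrome) (hq : q.Palindrome) (hpre : w ++ [a] <+: q)
    (hlen : q.length ≤ 2 * w.length) :
    ∃ p : List A, p.Palindrome ∧ p ++ [a] <+: w ∧ q.length + p.length = 2 * w.length := by
  obtain ⟨r, rfl⟩ := hpre
  simp only [length_append, length_singleton] at hlen
  have hsym : r.reverse ++ [a] ++ w = w ++ [a] ++ r := by
    simpa [hw.reverse_eq] using hq.reverse_eq
  have htake : w.take (r.length + 1) = r.reverse ++ [a] := by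
    simpa [take_append, take_of_length_le, show r.length + 1 - w.length = 0 by omega]
      using (congrArg (take (r.length + 1)) hsym).symm
  set p := w.drop (r.length + 1)
  have hw_eq : w = r.reverse ++ [a] ++ p := by rw [← htake, take_append_drop]
  have hp : p.reverse = p := by
    have := hq.reverse_eq
    rw [hw_eq] at this
    simpa using this
  refine ⟨p, of_reverse_eq hp, ⟨r, ?_⟩, ?_⟩
  · rw [← hp, ← hw.reverse_eq, hw_eq]; simp
  · have := congrArg length hw_eq
    simp only [length_append, length_reverse, length_singleton] at this ⊢
    omega

theorem exists_extension_of_palindrome_prefix {w p : List A} {a : A} (hw : w.Palindrome)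
    (hp : p.Palindrome) (hpre : p ++ [a] <+: w) :
    ∃ q : List A, q.Palindrome ∧ w ++ [a] <+: q ∧ q.length + p.length = 2 * w.length := by
  obtain ⟨t, ht⟩ := hpre
  have hw_eq : t.reverse ++ [a] ++ p = w := by
    rw [← hw.reverse_eq, ← ht]; simp [hp.reverse_eq]
  refine ⟨w ++ [a] ++ t, of_reverse_eq ?_, prefix_append _ _, ?_⟩
  · rw [← hw_eq]; simp [hp.reverse_eq]
  · have := congrArg length hw_eq
    simp only [← ht, length_append, length_reverse, length_singleton] at this ⊢
    omega

end List.Palindrome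

namespace IsPalClosure

variable {w pc : List A} {a : A}

theorem length_add_eq (hw : w.Palindrome) (hcl : IsPalClosure w a pc) {m : ℕ}
    (hm : IsMaxPalPrefLen w a m) : pc.length + m = 2 * w.length := by
  obtain ⟨⟨p, hp, hpre, rfl⟩, hmax⟩ := hm
  obtain ⟨q, hq, hqpre, hqlen⟩ := hw.exists_extension_of_palindrome_prefix hp hpre
  have hle := hcl.2.2 q hq hqpre
  obtain ⟨p', hp', hpre', hlen'⟩ :=
    hw.exists_palindrome_prefix_of_extension hcl.1 hcl.2.1 (by omega)
  have := hmax p' hp' hpre'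
  omega

theorem length_eq_of_forall_not_prefix (hw : w.Palindrome) (hcl : IsPalClosure w a pc)
    (hnone : ∀ p : List A, p.Palindrome → ¬ p ++ [a] <+: w) :
    pc.length = 2 * w.length + 1 := by
  have hle :=
    hcl.2.2 _ (.of_reverse_eq (l := w ++ [a] ++ w.reverse) (by simp)) (List.prefix_append _ _)
  simp only [List.length_append, List.length_reverse, List.length_singleton] at hle
  by_contra hne
  obtain ⟨p, hp, hpre, -⟩ :=
    hw.exists_palindrome_prefix_of_extension hcl.1 hcl.2.1 (q := pc) (by omega)
  exact hnone p hp hpre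

end IsPalClosure

structure IsIteratedPalClosure (W : ℕ → List A) (δ : ℕ → A) : Prop where
  zero : W 0 = []
  step : ∀ n, IsPalClosure (W n) (δ n) (W (n + 1))

namespace IsIteratedPalClosure

variable {W : ℕ → List A} {δ : ℕ → A}

theorem palindrome (hW : IsIteratedPalClosure W δ) : ∀ n, (W n).Palindrome
  | 0 => hW.zero ▸ .nil
  | n + 1 => (hW.step n).1

theorem append_prefix_succ (hW : IsIteratedPalClosure W δ) (n : ℕ) :
    W n ++ [δ n] <+: W (n + 1) :=
  (hW.step n).2.1

theorem prefix_of_le (hW : IsIteratedPalClosure W δ) {m n : ℕ} (h : m ≤ n) : W m <+: W n := by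
  induction h with
  | refl => exact List.prefix_refl _
  | step _ ih => exact ih.trans ((List.prefix_append _ _).trans (hW.append_prefix_succ _))

theorem append_prefix_of_lt (hW : IsIteratedPalClosure W δ) {j n : ℕ} (h : j < n) :
    W j ++ [δ j] <+: W n :=
  (hW.append_prefix_succ j).trans (hW.prefix_of_le h)

theorem strictMono_length (hW : IsIteratedPalClosure W δ) : StrictMono fun n ↦ (W n).length :=
  strictMono_nat_of_lt_succ fun n ↦ by
    simpa using (hW.append_prefix_succ n).length_le

theorem exists_eq_of_palindrome_prefix (hW : IsIteratedPalClosure W δ) {p : List A}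
    (hp : p.Palindrome) : ∀ {n}, p <+: W n → ∃ j ≤ n, p = W j
  | 0, hpre => ⟨0, le_rfl, by rw [hW.zero, List.prefix_nil] at hpre; rw [hpre, hW.zero]⟩
  | n + 1, hpre => by
    by_cases hle : p.length ≤ (W n).length
    · obtain ⟨j, hj, rfl⟩ := hW.exists_eq_of_palindrome_prefix hp
        (List.prefix_of_prefix_length_le hpre (hW.prefix_of_le n.le_succ) hle)
      exact ⟨j, hj.trans n.le_succ, rfl⟩
    · -- `p` extends `W n ++ [δ n]`, so minimality of the closure forces `p = W (n + 1)`
      have hext : W n ++ [δ n] <+: p :=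
        List.prefix_of_prefix_length_le (hW.append_prefix_succ n) hpre (by simp; omega)
      exact ⟨n + 1, le_rfl,
        hpre.eq_of_length (le_antisymm hpre.length_le ((hW.step n).2.2 p hp hext))⟩

theorem exists_eq_of_palindrome_append_prefix (hW : IsIteratedPalClosure W δ) {p : List A}
    {a : A} {n : ℕ} (hp : p.Palindrome) (hpre : p ++ [a] <+: W n) :
    ∃ j < n, p = W j ∧ δ j = a := by
  obtain ⟨j, -, rfl⟩ :=
    hW.exists_eq_of_palindrome_prefix hp ((List.prefix_append _ _).trans hpre)
  have hjn : j < n := hW.strictMono_length.lt_iff_lt.mp (by simpa using hpre.length_le)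
  have hδ : W j ++ [δ j] = W j ++ [a] :=
    (List.prefix_of_prefix_length_le (hW.append_prefix_of_lt hjn) hpre (by simp)).eq_of_length
      (by simp)
  exact ⟨j, hjn, rfl, by simpa using hδ⟩

theorem length_succ_add (hW : IsIteratedPalClosure W δ) {j n : ℕ} (hjn : j < n)
    (hδj : δ j = δ n) (hlast : ∀ i, j < i → i < n → δ i ≠ δ n) :
    (W (n + 1)).length + (W j).length = 2 * (W n).length := by
  refine (hW.step n).length_add_eq (hW.palindrome n)
    ⟨⟨W j, hW.palindrome j, hδj ▸ hW.append_prefix_of_lt hjn, rfl⟩, fun p hp hpre ↦ ?_⟩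
  obtain ⟨i, hin, rfl, hδi⟩ := hW.exists_eq_of_palindrome_append_prefix hp hpre
  exact hW.strictMono_length.monotone (not_lt.mp fun hji ↦ hlast i hji hin hδi)

theorem length_succ_of_forall_ne (hW : IsIteratedPalClosure W δ) {n : ℕ}
    (hfirst : ∀ i < n, δ i ≠ δ n) : (W (n + 1)).length = 2 * (W n).length + 1 :=
  (hW.step n).length_eq_of_forall_not_prefix (hW.palindrome n) fun _ hp hpre ↦
    let ⟨i, hin, _, hδi⟩ := hW.exists_eq_of_palindrome_append_prefix hp hpre
    hfirst i hin hδi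

section Periodic

variable {k : ℕ}

theorem length_succ_of_lt_period (hW : IsIteratedPalClosure W δ)
    (hδ : ∀ i j, δ i = δ j ↔ i % k = j % k) {n : ℕ} (hn : n < k) :
    (W (n + 1)).length = 2 * (W n).length + 1 :=
  hW.length_succ_of_forall_ne fun i hi hδi ↦ by
    rw [hδ, Nat.mod_eq_of_lt (hi.trans hn), Nat.mod_eq_of_lt hn] at hδi
    omega

theorem length_add_period_succ_add (hW : IsIteratedPalClosure W δ)
    (hδ : ∀ i j, δ i = δ j ↔ i % k = j % k) (hk : 0 < k) (n : ℕ) :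
    (W (n + k + 1)).length + (W n).length = 2 * (W (n + k)).length := by
  refine hW.length_succ_add (by omega) (by simp [hδ]) fun i hni hik hδi ↦ ?_
  rw [hδ, Nat.add_mod_right] at hδi
  have hdvd : k ∣ i - n := Nat.dvd_of_mod_eq_zero (Nat.sub_mod_eq_zero_of_mod_eq hδi)
  have := Nat.le_of_dvd (by omega) hdvd
  omega

end Periodic
end IsIteratedPalClosure

theorem eq_of_same_recurrence {u v : ℕ → ℕ}
    (hu : ∀ n, u (n + 4) + u n = 2 * u (n + 3)) (hv : ∀ n, v (n + 4) + v n = 2 * v (n + 3))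
    (hinit : ∀ n < 4, u n = v n) : u = v := by
  funext n
  induction n using Nat.strong_induction_on with
  | _ n ih =>
    rcases lt_or_ge n 4 with hn | hn
    · exact hinit n hn
    · obtain ⟨m, rfl⟩ := Nat.exists_eq_add_of_le' hn
      have := hu m; have := hv m; have := ih m (by omega); have := ih (m + 3) (by omega)
      omega

theorem tribonacci_length (W : ℕ → List (Fin 3)) (δ : ℕ → Fin 3)
    (hδ : ∀ n, δ n = (n : Fin 3))
    (h0 : W 0 = []) (hstep : ∀ n, IsPalClosure (W n) (δ n) (W (n+1)))
    (T : ℕ → ℕ) (hT0 : T 0 = 0) (hT1 : T 1 = 1) (hT2 : T 2 = 1)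
    (hTrec : ∀ n, T (n + 3) = T (n + 2) + T (n + 1) + T n) :
    ∀ n, (W n).length = (T (n + 3) + T (n + 1) - 3) / 2 := by
  have hW : IsIteratedPalClosure W δ := ⟨h0, hstep⟩
  have hδ3 : ∀ i j, δ i = δ j ↔ i % 3 = j % 3 := by simp [hδ, Fin.ext_iff, Fin.val_natCast]
  have hdouble : ∀ n < 3, (W (n + 1)).length = 2 * (W n).length + 1 :=
    fun n hn ↦ hW.length_succ_of_lt_period hδ3 hn
  have hT : ∀ n, T (n + 4) + T n = 2 * T (n + 3) := fun n ↦ by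
    have : T (n + 4) = T (n + 3) + T (n + 2) + T (n + 1) := hTrec (n + 1)
    have := hTrec n
    omega
  have key : (fun n ↦ 2 * (W n).length + 3) = fun n ↦ T (n + 3) + T (n + 1) := by
    refine eq_of_same_recurrence (fun n ↦ ?_) (fun n ↦ ?_) (fun n hn ↦ ?_)
    · have : (W (n + 4)).length + (W n).length = 2 * (W (n + 3)).length :=
        hW.length_add_period_succ_add hδ3 (by norm_num) n
      omega
    · have : T (n + 7) + T (n + 3) = 2 * T (n + 6) := hT (n + 3)
      have : T (n + 5) + T (n + 1) = 2 * T (n + 4) := hT (n + 1)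
      show T (n + 7) + T (n + 5) + (T (n + 3) + T (n + 1)) = 2 * (T (n + 6) + T (n + 4))
      omega
    · have := hTrec 0; have := hTrec 1; have := hTrec 2; have := hTrec 3
      have := hdouble 0; have := hdouble 1; have := hdouble 2
      interval_cases n <;> simp_all
  intro n
  have := congrFun key n
  omega
end

section
/- In the palindromic-closure construction, for any n and any letter a occurring in w_n, the longest palindromic prefix of w_n followed by a equals some w_k with k ≤ n; i.e., every palindromic prefix of w_n is one of the words w_0, w_1, ..., w_n. -/
open List

variable {A : Type*}

theorem palindromic_prefix_is_some_wk (W : ℕ → List A) (δ : ℕ → A)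
    (h0 : W 0 = []) (hstep : ∀ n, IsPalClosure (W n) (δ n) (W (n+1)))
    (n : ℕ) (p : List A) (hp : p.Palindrome) (hpre : p <+: W n) :
    ∃ k, k ≤ n ∧ p = W k := by
  induction n with
  | zero =>
    refine ⟨0, le_refl _, ?_⟩
    rw [h0] at hpre ⊢
    exact List.prefix_nil.mp hpre
  | succ n ih =>
    obtain ⟨hpal, hwa, hmin⟩ := hstep n
    rcases eq_or_lt_of_le hpre.length_le with heq | hlt
    · exact ⟨n+1, le_refl _, hpre.eq_of_length heq⟩
    · have hle : p.length ≤ (W n).length := by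
        by_contra h
        push_neg at h
        have hwp : (W n ++ [δ n]) <+: p := by
          apply List.prefix_of_prefix_length_le hwa hpre
          simpa using h
        exact absurd (hmin p hp hwp) (not_le.mpr hlt)
      have hpn : p <+: W n :=
        List.prefix_of_prefix_length_le hpre ((List.prefix_append _ _).trans hwa) hle
      obtain ⟨k, hk, hpk⟩ := ih hpn
      exact ⟨k, le_trans hk (Nat.le_succ _), hpk⟩
end
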